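/- If ω ≠ ω⁺_{i,Δ} for every i ∈ j + ℤ, then the A_k-modules R_{j,Δ,ω} and R_{j+1,Δ,ω} are isomorphic (so the isomorphism class of the simple dense module depends only on the coset j + ℤ). -/

import Mathlib

noncomputable section

namespace BP

/-- The free `ℂ`-algebra on four generators `J, G⁺, G⁻, L`. -/
abbrev F : Type := FreeAlgebra ℂ (Fin 4)

def jF : F := FreeAlgebra.ι ℂ 0
def gpF : F := FreeAlgebra.ι ℂ 1
def gmF : F := FreeAlgebra.ι ℂ 2
def lF : F := FreeAlgebra.ι ℂ 3

/-- `f_k(J, L) = 3J² − (k+3)L − (1/8)(k+1)(2k+3)·1`, as an element of the free algebra. -/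
def fF (k : ℂ) : F :=
  3 * jF ^ 2 - algebraMap ℂ F (k + 3) * lF - algebraMap ℂ F (1/8 * (k + 1) * (2*k + 3))

/-- The defining relations of `A_k`: `L` is central, `[J,G⁺] = G⁺`, `[J,G⁻] = −G⁻`,
`[G⁺,G⁻] = f_k(J,L)`. -/
inductive Rel (k : ℂ) : F → F → Prop
  | lj : Rel k (lF * jF) (jF * lF)
  | lgp : Rel k (lF * gpF) (gpF * lF)
  | lgm : Rel k (lF * gmF) (gmF * lF)
  | jgp : Rel k (jF * gpF - gpF * jF) gpF
  | jgm : Rel k (jF * gmF - gmF * jF) (-gmF)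
  | gpgm : Rel k (gpF * gmF - gmF * gpF) (fF k)

/-- The unital associative `ℂ`-algebra `A_k`: the quotient of the free algebra on
`J, G⁺, G⁻, L` by the two-sided ideal generated by the defining relations. -/
def A (k : ℂ) : Type := RingQuot (Rel k)

instance (k : ℂ) : Ring (A k) := inferInstanceAs (Ring (RingQuot (Rel k)))
instance (k : ℂ) : Algebra ℂ (A k) := inferInstanceAs (Algebra ℂ (RingQuot (Rel k)))

/-- The quotient map `F →ₐ[ℂ] A_k`. -/
def mk (k : ℂ) : F →ₐ[ℂ] A k := RingQuot.mkAlgHom ℂ (Rel k)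

/-- The generator `J` of `A_k`. -/
def J (k : ℂ) : A k := mk k jF
/-- The generator `G⁺` of `A_k`. -/
def Gp (k : ℂ) : A k := mk k gpF
/-- The generator `G⁻` of `A_k`. -/
def Gm (k : ℂ) : A k := mk k gmF
/-- The generator `L` of `A_k`. -/
def L (k : ℂ) : A k := mk k lF

/-- The central element `Ω = G⁺G⁻ + G⁻G⁺ + 2J³ + J − 2J((k+3)L + (1/8)(k+1)(2k+3)·1)`. -/
def Omega (k : ℂ) : A k :=
  Gp k * Gm k + Gm k * Gp k + 2 * J k ^ 3 + J k
    - 2 * J k * (algebraMap ℂ (A k) (k + 3) * L k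
        + algebraMap ℂ (A k) (1/8 * (k + 1) * (2*k + 3)))

/-- The left ideal of `A_k` by which one quotients to obtain the induced module
`R_{j,Δ,ω} = A_k ⊗_{C_k} ℂ_{j,Δ,ω}`: it is generated by `J − j·1`, `L − Δ·1` and
`Ω − ω·1`. -/
def denseIdeal (k j Δ ω : ℂ) : Submodule (A k) (A k) :=
  Submodule.span (A k)
    {J k - algebraMap ℂ (A k) j, L k - algebraMap ℂ (A k) Δ,
      Omega k - algebraMap ℂ (A k) ω}

/-- The induced module `R_{j,Δ,ω} = A_k ⊗_{C_k} ℂ_{j,Δ,ω}`, realised as the quotient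
`A_k / A_k·(J−j, L−Δ, Ω−ω)`. -/
abbrev Rmod (k j Δ ω : ℂ) : Type := A k ⧸ denseIdeal k j Δ ω

/-- The generating vector `v = 1 ⊗ 1` of `R_{j,Δ,ω}`. -/
def rv (k j Δ ω : ℂ) : Rmod k j Δ ω := Submodule.Quotient.mk (1 : A k)

/-- `ω⁺_{j,Δ} = (2j+1)(j(j+1) − (k+3)Δ − (1/8)(k+1)(2k+3))`. -/
def omegaP (k j Δ : ℂ) : ℂ :=
  (2*j + 1) * (j*(j + 1) - (k + 3)*Δ - 1/8 * (k + 1) * (2*k + 3))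

/-- `ω⁻_{j,Δ} = (2j−1)(j(j−1) − (k+3)Δ − (1/8)(k+1)(2k+3))`. -/
def omegaM (k j Δ : ℂ) : ℂ :=
  (2*j - 1) * (j*(j - 1) - (k + 3)*Δ - 1/8 * (k + 1) * (2*k + 3))

/-! The elements `P(x) = (2x + 1)(x(x + 1) − (k+3)L − (1/8)(k+1)(2k+3))` give two expressions
`Ω = 2G⁻G⁺ + P(J) = 2G⁺G⁻ + P(J − 1)`. Since `P(J − 1)G⁺ = G⁺P(J)`, comparing them shows that
`Ω` commutes with `G^±`, and on the generating vector of `R_{j,Δ,ω}` (resp. `R_{j+1,Δ,ω}`) the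
element `G⁻G⁺` (resp. `G⁺G⁻`) acts by the same scalar `c = (ω − ω⁺_{j,Δ})/2`. As `G⁻` lowers
and `G⁺` raises the `J`-eigenvalue by one, right multiplication by `G⁻` and by `c⁻¹G⁺` induce
mutually inverse maps `R_{j,Δ,ω} ⇄ R_{j+1,Δ,ω}` whenever `c ≠ 0`. -/

end BP

namespace Submodule

section Semiring

variable {A : Type*} [Semiring A] {I : Submodule A A}

theorem mul_mem_of_semiconjBy {g s s' : A} (h : SemiconjBy g s' s) (hs' : s' ∈ I) :
    s * g ∈ I :=
  h.eq ▸ I.smul_mem g hs'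

theorem mul_mem_of_mem_span {S : Set A} {g : A} (h : ∀ s ∈ S, s * g ∈ I) {a : A}
    (ha : a ∈ span A S) : a * g ∈ I :=
  (span_le (p := I.comap (LinearMap.toSpanSingleton A A g))).mpr h ha

end Semiring

variable {A : Type*} [Ring A] {I I' : Submodule A A}

def mulRightQuotient (x : A) (hx : ∀ a ∈ I, a * x ∈ I') : (A ⧸ I) →ₗ[A] A ⧸ I' :=
  I.liftQ (I'.mkQ ∘ₗ LinearMap.toSpanSingleton A A x) fun a ha => by
    simpa [Quotient.mk_eq_zero] using hx a ha

@[simp]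
theorem mulRightQuotient_mk (x : A) (hx : ∀ a ∈ I, a * x ∈ I') (a : A) :
    mulRightQuotient x hx (Quotient.mk a) = Quotient.mk (a * x) :=
  rfl

theorem smul_mk_one_eq_iff {R : Type*} [CommSemiring R] [Algebra R A] {a : A} {r : R} :
    a • (Quotient.mk 1 : A ⧸ I) = r • Quotient.mk 1 ↔ a ≡ algebraMap R A r [SMOD I] := by
  rw [SModEq.def, ← Quotient.mk_smul, ← Quotient.mk_smul, smul_eq_mul, mul_one,
    Algebra.algebraMap_eq_smul_one]

variable {K : Type*} [Field K] [Algebra K A]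

def quotEquivOfMulRight (x y : A) (c : K) (hc : c ≠ 0) (hx : ∀ a ∈ I, a * x ∈ I')
    (hy : ∀ b ∈ I', b * y ∈ I) (hxy : x * y ≡ algebraMap K A c [SMOD I])
    (hyx : y * x ≡ algebraMap K A c [SMOD I']) : (A ⧸ I) ≃ₗ[A] A ⧸ I' :=
  .ofLinearMap (mulRightQuotient x hx) (c⁻¹ • mulRightQuotient y hy)
    (linearMap_qext _ <| LinearMap.ext_ring <| by
      simp only [LinearMap.comp_apply, mkQ_apply, LinearMap.smul_apply, LinearMap.map_smul_of_tower,
        mulRightQuotient_mk, one_mul, LinearMap.id_apply]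
      rw [SModEq.def.mp hyx, Algebra.algebraMap_eq_smul_one, Quotient.mk_smul, inv_smul_smul₀ hc])
    (linearMap_qext _ <| LinearMap.ext_ring <| by
      simp only [LinearMap.comp_apply, mkQ_apply, LinearMap.smul_apply, mulRightQuotient_mk,
        one_mul, LinearMap.id_apply]
      rw [SModEq.def.mp hxy, Algebra.algebraMap_eq_smul_one, Quotient.mk_smul, inv_smul_smul₀ hc])

end Submodule

namespace BP

variable {k : ℂ}

def E (k : ℂ) : A k :=
  algebraMap ℂ (A k) (k + 3) * L k + algebraMap ℂ (A k) (1/8 * (k + 1) * (2*k + 3))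

def omegaPoly (k : ℂ) (x : A k) : A k := (2 * x + 1) * (x * (x + 1) - E k)

theorem mk_jF : mk k jF = J k := rfl
theorem mk_gpF : mk k gpF = Gp k := rfl
theorem mk_gmF : mk k gmF = Gm k := rfl
theorem mk_lF : mk k lF = L k := rfl

theorem mk_eq_of_rel {a b : F} (h : Rel k a b) : mk k a = mk k b :=
  RingQuot.mkAlgHom_rel ℂ h

theorem commute_L_J : Commute (L k) (J k) := by
  have h := mk_eq_of_rel (Rel.lj (k := k))
  rwa [map_mul, map_mul] at h

theorem commute_L_Gp : Commute (L k) (Gp k) := by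
  have h := mk_eq_of_rel (Rel.lgp (k := k))
  rwa [map_mul, map_mul] at h

theorem commute_L_Gm : Commute (L k) (Gm k) := by
  have h := mk_eq_of_rel (Rel.lgm (k := k))
  rwa [map_mul, map_mul] at h

theorem semiconjBy_Gp_J : SemiconjBy (Gp k) (J k) (J k - 1) := by
  have h := mk_eq_of_rel (Rel.jgp (k := k))
  simp only [map_sub, map_mul, mk_jF, mk_gpF] at h
  rw [SemiconjBy, sub_one_mul, sub_eq_iff_eq_add.mp h]
  abel

theorem semiconjBy_Gm_J : SemiconjBy (Gm k) (J k - 1) (J k) := by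
  have h := mk_eq_of_rel (Rel.jgm (k := k))
  simp only [map_sub, map_mul, map_neg, mk_jF, mk_gmF] at h
  rw [SemiconjBy, mul_sub_one, sub_eq_iff_eq_add.mp h]
  abel

theorem Gp_mul_Gm : Gp k * Gm k = Gm k * Gp k + (3 * J k ^ 2 - E k) := by
  have h := mk_eq_of_rel (Rel.gpgm (k := k))
  simp only [fF, map_sub, map_mul, map_pow, map_ofNat, AlgHom.commutes, mk_jF, mk_gpF, mk_gmF,
    mk_lF] at h
  rw [← sub_eq_iff_eq_add', h, E, sub_sub, ← map_mul, ← map_mul]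

theorem Gm_mul_Gp : Gm k * Gp k = Gp k * Gm k - (3 * J k ^ 2 - E k) := by
  rw [Gp_mul_Gm, add_sub_cancel_right]

theorem commute_E {x : A k} (hx : Commute x (L k)) : Commute x (E k) :=
  ((Algebra.commute_algebraMap_right _ x).mul_right hx).add_right
    (Algebra.commute_algebraMap_right _ x)

theorem semiconjBy_omegaPoly {g x y : A k} (h : SemiconjBy g x y) (hE : Commute g (E k)) :
    SemiconjBy g (omegaPoly k x) (omegaPoly k y) :=
  ((SemiconjBy.mul_right (Commute.ofNat_right g 2) h).add_right (Commute.one_right g)).mul_right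
    ((h.mul_right (h.add_right (Commute.one_right g))).sub_right hE)

theorem Omega_eq : Omega k = Gp k * Gm k + Gm k * Gp k + 2 * J k ^ 3 + J k - 2 * J k * E k :=
  rfl

theorem Omega_eq_Gm_mul_Gp : Omega k = 2 * (Gm k * Gp k) + omegaPoly k (J k) := by
  rw [Omega_eq, Gp_mul_Gm, omegaPoly]
  noncomm_ring

theorem Omega_eq_Gp_mul_Gm : Omega k = 2 * (Gp k * Gm k) + omegaPoly k (J k - 1) := by
  rw [Omega_eq, Gm_mul_Gp, omegaPoly]
  noncomm_ring

theorem commute_Omega_Gp : Commute (Omega k) (Gp k) := by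
  have h : SemiconjBy (Gp k) (omegaPoly k (J k)) (omegaPoly k (J k - 1)) :=
    semiconjBy_omegaPoly semiconjBy_Gp_J (commute_E commute_L_Gp.symm)
  calc Omega k * Gp k = (2 * (Gp k * Gm k) + omegaPoly k (J k - 1)) * Gp k := by
        rw [← Omega_eq_Gp_mul_Gm]
    _ = Gp k * (2 * (Gm k * Gp k) + omegaPoly k (J k)) := by
        rw [add_mul, ← h.eq]
        noncomm_ring
    _ = Gp k * Omega k := by rw [← Omega_eq_Gm_mul_Gp]

theorem commute_Omega_Gm : Commute (Omega k) (Gm k) := by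
  have h : SemiconjBy (Gm k) (omegaPoly k (J k - 1)) (omegaPoly k (J k)) :=
    semiconjBy_omegaPoly semiconjBy_Gm_J (commute_E commute_L_Gm.symm)
  calc Omega k * Gm k = (2 * (Gm k * Gp k) + omegaPoly k (J k)) * Gm k := by
        rw [← Omega_eq_Gm_mul_Gp]
    _ = Gm k * (2 * (Gp k * Gm k) + omegaPoly k (J k - 1)) := by
        rw [add_mul, ← h.eq]
        noncomm_ring
    _ = Gm k * Omega k := by rw [← Omega_eq_Gp_mul_Gm]

section Eigenvector

variable {M : Type*} [AddCommGroup M] [Module (A k) M] [Module ℂ M] [IsScalarTower ℂ (A k) M]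
  {v : M} {Δ : ℂ}

theorem E_smul (hL : L k • v = Δ • v) :
    E k • v = ((k + 3) * Δ + 1/8 * (k + 1) * (2*k + 3)) • v := by
  simp only [E, add_smul, mul_smul, hL, algebraMap_smul, smul_algebra_smul_comm (A := A k)]
  module

theorem omegaPoly_smul {x : A k} {r : ℂ} (hx : x • v = r • v) (hL : L k • v = Δ • v) :
    omegaPoly k x • v = omegaP k r Δ • v := by
  simp only [omegaPoly, mul_smul, add_smul, sub_smul, smul_add, smul_sub, hx, E_smul hL, one_smul,
    smul_algebra_smul_comm (A := A k), ofNat_smul_eq_nsmul]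
  rw [omegaP]
  module

end Eigenvector

section DenseModule

variable (k j Δ ω : ℂ)

theorem J_sub_mem_denseIdeal : J k - algebraMap ℂ (A k) j ∈ denseIdeal k j Δ ω :=
  Submodule.subset_span (by simp)

theorem L_sub_mem_denseIdeal : L k - algebraMap ℂ (A k) Δ ∈ denseIdeal k j Δ ω :=
  Submodule.subset_span (by simp)

theorem Omega_sub_mem_denseIdeal : Omega k - algebraMap ℂ (A k) ω ∈ denseIdeal k j Δ ω :=
  Submodule.subset_span (by simp)

theorem J_smul_rv : J k • rv k j Δ ω = j • rv k j Δ ω :=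
  Submodule.smul_mk_one_eq_iff.mpr (SModEq.sub_mem.mpr (J_sub_mem_denseIdeal k j Δ ω))

theorem L_smul_rv : L k • rv k j Δ ω = Δ • rv k j Δ ω :=
  Submodule.smul_mk_one_eq_iff.mpr (SModEq.sub_mem.mpr (L_sub_mem_denseIdeal k j Δ ω))

theorem Omega_smul_rv : Omega k • rv k j Δ ω = ω • rv k j Δ ω :=
  Submodule.smul_mk_one_eq_iff.mpr (SModEq.sub_mem.mpr (Omega_sub_mem_denseIdeal k j Δ ω))

theorem Gm_mul_Gp_smul_rv :
    (Gm k * Gp k) • rv k j Δ ω = ((ω - omegaP k j Δ) / 2) • rv k j Δ ω := by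
  have h := Omega_smul_rv k j Δ ω
  rw [Omega_eq_Gm_mul_Gp, add_smul, mul_smul, ofNat_smul_eq_nsmul,
    omegaPoly_smul (J_smul_rv k j Δ ω) (L_smul_rv k j Δ ω)] at h
  generalize (Gm k * Gp k) • rv k j Δ ω = w at h ⊢
  linear_combination (norm := module) (1/2 : ℂ) • h

theorem Gp_mul_Gm_smul_rv :
    (Gp k * Gm k) • rv k (j + 1) Δ ω = ((ω - omegaP k j Δ) / 2) • rv k (j + 1) Δ ω := by
  have hJ : (J k - 1) • rv k (j + 1) Δ ω = j • rv k (j + 1) Δ ω := by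
    rw [sub_smul, J_smul_rv, one_smul]
    module
  have h := Omega_smul_rv k (j + 1) Δ ω
  rw [Omega_eq_Gp_mul_Gm, add_smul, mul_smul, ofNat_smul_eq_nsmul,
    omegaPoly_smul hJ (L_smul_rv k (j + 1) Δ ω)] at h
  generalize (Gp k * Gm k) • rv k (j + 1) Δ ω = w at h ⊢
  linear_combination (norm := module) (1/2 : ℂ) • h

theorem semiconjBy_Gm_J_sub :
    SemiconjBy (Gm k) (J k - algebraMap ℂ (A k) (j + 1)) (J k - algebraMap ℂ (A k) j) := by
  rw [map_add, map_one, add_comm, ← sub_sub]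
  exact semiconjBy_Gm_J.sub_right (Algebra.commute_algebraMap_right j (Gm k))

theorem semiconjBy_Gp_J_sub :
    SemiconjBy (Gp k) (J k - algebraMap ℂ (A k) j) (J k - algebraMap ℂ (A k) (j + 1)) := by
  rw [map_add, map_one, add_comm, ← sub_sub]
  exact semiconjBy_Gp_J.sub_right (Algebra.commute_algebraMap_right j (Gp k))

theorem mul_Gm_mem_denseIdeal {a : A k} (ha : a ∈ denseIdeal k j Δ ω) :
    a * Gm k ∈ denseIdeal k (j + 1) Δ ω := by
  refine Submodule.mul_mem_of_mem_span ?_ ha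
  rintro s (rfl | rfl | rfl)
  · exact Submodule.mul_mem_of_semiconjBy (semiconjBy_Gm_J_sub k j)
      (J_sub_mem_denseIdeal k (j + 1) Δ ω)
  · exact Submodule.mul_mem_of_semiconjBy
      (commute_L_Gm.symm.sub_right (Algebra.commute_algebraMap_right Δ _))
      (L_sub_mem_denseIdeal k (j + 1) Δ ω)
  · exact Submodule.mul_mem_of_semiconjBy
      (commute_Omega_Gm.symm.sub_right (Algebra.commute_algebraMap_right ω _))
      (Omega_sub_mem_denseIdeal k (j + 1) Δ ω)

theorem mul_Gp_mem_denseIdeal {a : A k} (ha : a ∈ denseIdeal k (j + 1) Δ ω) :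
    a * Gp k ∈ denseIdeal k j Δ ω := by
  refine Submodule.mul_mem_of_mem_span ?_ ha
  rintro s (rfl | rfl | rfl)
  · exact Submodule.mul_mem_of_semiconjBy (semiconjBy_Gp_J_sub k j)
      (J_sub_mem_denseIdeal k j Δ ω)
  · exact Submodule.mul_mem_of_semiconjBy
      (commute_L_Gp.symm.sub_right (Algebra.commute_algebraMap_right Δ _))
      (L_sub_mem_denseIdeal k j Δ ω)
  · exact Submodule.mul_mem_of_semiconjBy
      (commute_Omega_Gp.symm.sub_right (Algebra.commute_algebraMap_right ω _))
      (Omega_sub_mem_denseIdeal k j Δ ω)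

end DenseModule

/-- if `ω ≠ ω⁺_{i,Δ}` for every `i ∈ j + ℤ`, then
`R_{j,Δ,ω} ≅ R_{j+1,Δ,ω}` as `A_k`-modules. -/
theorem dense_shift_iso (k j Δ ω : ℂ) (h : ∀ m : ℤ, ω ≠ omegaP k (j + m) Δ) :
    Nonempty (Rmod k j Δ ω ≃ₗ[A k] Rmod k (j + 1) Δ ω) := by
  have hc : (ω - omegaP k j Δ) / 2 ≠ 0 :=
    div_ne_zero (sub_ne_zero.mpr (by simpa using h 0)) two_ne_zero
  exact ⟨Submodule.quotEquivOfMulRight (Gm k) (Gp k) _ hc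
    (fun _ => mul_Gm_mem_denseIdeal k j Δ ω) (fun _ => mul_Gp_mem_denseIdeal k j Δ ω)
    (Submodule.smul_mk_one_eq_iff.mp (Gm_mul_Gp_smul_rv k j Δ ω))
    (Submodule.smul_mk_one_eq_iff.mp (Gp_mul_Gm_smul_rv k j Δ ω))⟩

end BP
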